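/- arXiv:2402.19127 — 5 statements merged into one kernel-verified Lean document; each statement's English description precedes it below -/
import Mathlib

section
/- For K ≥ 1, M ∈ ℤ, i, j ≥ 0 with 2(i+j+M)+K-1 ≥ 0, the convoluted Catalan number C_{K,i+j+M} equals the number of lattice paths from (-i-M, -i-M-K+1) to (j, j) with right and up unit steps that never touch the line y = x - K. -/
/-- Convoluted Catalan number `C_{K,p}` for natural `p`, with the
convention `binom(n,-1) = 0`. -/
def convCatalan (K p : ℕ) : ℤ :=
  ((2 * p + K - 1).choose p : ℤ) -
    (if p = 0 then 0 else ((2 * p + K - 1).choose (p - 1) : ℤ))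

/-- Convoluted Catalan number for an integer index: `C_{K,p} = 0` for `p < 0`. -/
def convCatalanZ (K : ℕ) (p : ℤ) : ℤ :=
  if p < 0 then 0 else convCatalan K p.toNat

/-- The position after `i` steps of the lattice path starting at `A` whose
steps are encoded by `s : Fin L → Bool` (`true` = unit right step,
`false` = unit up step). -/
def pathPos (A : ℤ × ℤ) {L : ℕ} (s : Fin L → Bool) (i : ℕ) : ℤ × ℤ :=
  (A.1 + ((Finset.univ.filter (fun j : Fin L => (j : ℕ) < i ∧ s j = true)).card : ℤ),
   A.2 + ((Finset.univ.filter (fun j : Fin L => (j : ℕ) < i ∧ s j = false)).card : ℤ))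




namespace ConvCatAux

def cnt {L : ℕ} (s : Fin L → Bool) (b : Bool) (t : ℕ) : ℕ :=
  (Finset.univ.filter (fun j : Fin L => (j : ℕ) < t ∧ s j = b)).card

lemma cnt_zero {L : ℕ} (s : Fin L → Bool) (b : Bool) : cnt s b 0 = 0 := by
  simp [cnt]

lemma cnt_cons_succ {L : ℕ} (b : Bool) (s : Fin L → Bool) (v : Bool) (t : ℕ) :
    cnt (Fin.cons b s) v (t + 1) = (if b = v then 1 else 0) + cnt s v t := by
  classical
  simp only [cnt, Finset.card_filter]
  rw [Fin.sum_univ_succ]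
  congr 1
  · simp
  · refine Finset.sum_congr rfl fun j _ => ?_
    simp [Nat.succ_lt_succ_iff]

lemma cnt_true_add_false {L : ℕ} (s : Fin L → Bool) :
    cnt s true L + cnt s false L = L := by
  classical
  simp only [cnt, Finset.card_filter, ← Finset.sum_add_distrib]
  have h1 : ∀ j : Fin L,
      ((if ((j : ℕ) < L ∧ s j = true) then 1 else 0)
        + (if ((j : ℕ) < L ∧ s j = false) then 1 else 0)) = 1 := by
    intro j
    cases h : s j <;> simp [j.isLt, h]
  rw [Finset.sum_congr rfl (fun j _ => h1 j)]
  simp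


lemma cnt_cons_same {L : ℕ} (v : Bool) (s : Fin L → Bool) (t : ℕ) :
    cnt (Fin.cons v s) v (t + 1) = 1 + cnt s v t := by
  rw [cnt_cons_succ]; simp

lemma cnt_cons_ne {L : ℕ} {b v : Bool} (h : b ≠ v) (s : Fin L → Bool) (t : ℕ) :
    cnt (Fin.cons b s) v (t + 1) = cnt s v t := by
  rw [cnt_cons_succ]; simp [h]

def Ok (c : ℕ) {L : ℕ} (s : Fin L → Bool) : Prop :=
  ∀ t ≤ L, cnt s true t ≠ cnt s false t + c

instance (c L : ℕ) : DecidablePred (fun s : Fin L → Bool => Ok c s) := fun _ => by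
  unfold Ok; infer_instance

lemma ok_cons_true {L c : ℕ} (s : Fin L → Bool) :
    Ok (c + 1) (Fin.cons true s) ↔ Ok c s := by
  constructor
  · intro h t ht
    have := h (t + 1) (by omega)
    rw [cnt_cons_same, cnt_cons_ne (by simp)] at this
    omega
  · intro h t ht
    cases t with
    | zero => simp [cnt_zero]
    | succ t =>
      rw [cnt_cons_same, cnt_cons_ne (by simp)]
      have := h t (by omega)
      omega

lemma ok_cons_false {L c : ℕ} (s : Fin L → Bool) :
    Ok c (Fin.cons false s) ↔ (c ≠ 0 ∧ Ok (c + 1) s) := by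
  constructor
  · intro h
    refine ⟨?_, ?_⟩
    · have := h 0 (by omega)
      simp [cnt_zero] at this
      omega
    · intro t ht
      have := h (t + 1) (by omega)
      rw [cnt_cons_same, cnt_cons_ne (by simp)] at this
      omega
  · rintro ⟨hc, h⟩ t ht
    cases t with
    | zero => simp [cnt_zero]; omega
    | succ t =>
      rw [cnt_cons_same, cnt_cons_ne (by simp)]
      have := h t (by omega)
      omega

def N (c L p : ℕ) : ℕ :=
  (Finset.univ.filter (fun s : Fin L → Bool => cnt s true L = p ∧ Ok c s)).card


lemma filter_card_cons {L : ℕ} (Q : (Fin (L + 1) → Bool) → Prop) [DecidablePred Q] :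
    (Finset.univ.filter Q).card
      = (Finset.univ.filter (fun s : Fin L → Bool => Q (Fin.cons true s))).card
        + (Finset.univ.filter (fun s : Fin L → Bool => Q (Fin.cons false s))).card := by
  classical
  rw [Finset.card_filter, Finset.card_filter, Finset.card_filter]
  rw [← Fintype.sum_equiv (Fin.consEquiv (fun _ : Fin (L+1) => Bool))
      (fun x : Bool × (Fin L → Bool) => if Q (Fin.cons x.1 x.2) then 1 else 0)
      (fun s => if Q s then 1 else 0) (fun x => rfl)]
  rw [Fintype.sum_prod_type, Fintype.sum_bool]

lemma N_c_zero (L p : ℕ) : N 0 L p = 0 := by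
  unfold N
  rw [Finset.card_eq_zero, Finset.filter_eq_empty_iff]
  rintro s - ⟨-, hok⟩
  exact hok 0 (by omega) (by simp [cnt_zero])

lemma N_L_zero (c p : ℕ) : N c 0 p = if p = 0 ∧ c ≠ 0 then 1 else 0 := by
  classical
  unfold N
  have h3 : ∀ s : Fin 0 → Bool, ((cnt s true 0 = p ∧ Ok c s) ↔ (p = 0 ∧ c ≠ 0)) := by
    intro s
    have h1 : cnt s true 0 = 0 := cnt_zero _ _
    have h2 : Ok c s ↔ c ≠ 0 := by
      unfold Ok
      constructor
      · intro h hc0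
        exact h 0 (le_refl 0) (by rw [cnt_zero, cnt_zero, hc0])
      · intro hc t ht
        rw [Nat.le_zero] at ht; subst ht
        rw [cnt_zero, cnt_zero]; omega
    rw [h1, h2, eq_comm]
  rw [Finset.filter_congr (fun s _ => h3 s)]
  by_cases hq : p = 0 ∧ c ≠ 0
  · simp [hq, Finset.filter_true_of_mem]
  · simp [hq]

lemma N_rec_succ (c L p : ℕ) :
    N (c + 1) (L + 1) (p + 1) = N c L p + N (c + 2) L (p + 1) := by
  classical
  unfold N
  rw [filter_card_cons]
  congr 1
  · refine congrArg Finset.card (Finset.filter_congr fun s _ => ?_)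
    rw [cnt_cons_same, ok_cons_true]
    constructor
    · rintro ⟨h1, h2⟩; exact ⟨by omega, h2⟩
    · rintro ⟨h1, h2⟩; exact ⟨by omega, h2⟩
  · refine congrArg Finset.card (Finset.filter_congr fun s _ => ?_)
    rw [cnt_cons_ne (by simp), ok_cons_false]
    constructor
    · rintro ⟨h1, h2⟩; exact ⟨h1, h2.2⟩
    · rintro ⟨h1, h2⟩; exact ⟨h1, by omega, h2⟩

lemma N_rec_zero (c L : ℕ) :
    N (c + 1) (L + 1) 0 = N (c + 2) L 0 := by
  classical
  unfold N
  rw [filter_card_cons]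
  have h1 : (Finset.univ.filter (fun s : Fin L → Bool =>
      cnt (Fin.cons true s) true (L + 1) = 0 ∧ Ok (c + 1) (Fin.cons true s))) = ∅ := by
    rw [Finset.filter_eq_empty_iff]
    rintro s - ⟨h1, -⟩
    rw [cnt_cons_same] at h1
    omega
  rw [h1, Finset.card_empty, Nat.zero_add]
  refine congrArg Finset.card (Finset.filter_congr fun s _ => ?_)
  rw [cnt_cons_ne (by simp), ok_cons_false]
  constructor
  · rintro ⟨h1, h2⟩; exact ⟨h1, h2.2⟩
  · rintro ⟨h1, h2⟩; exact ⟨h1, by omega, h2⟩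

lemma N_eq : ∀ (L c p : ℕ), 2 * p < L + c →
    (N c L p : ℤ) = (L.choose p : ℤ) - (L.choose (L + c - p) : ℤ) := by
  intro L
  induction L with
  | zero =>
    intro c p h
    rw [N_L_zero]
    by_cases hp : p = 0
    · subst hp
      have hc : 0 < c := by omega
      rw [if_pos ⟨rfl, by omega⟩,
        Nat.choose_eq_zero_of_lt (show 0 < 0 + c - 0 by omega)]
      simp
    · rw [if_neg (by tauto),
        Nat.choose_eq_zero_of_lt (show 0 < p by omega),
        Nat.choose_eq_zero_of_lt (show 0 < 0 + c - p by omega)]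
      simp
  | succ L ih =>
    intro c p h
    match c with
    | 0 =>
      rw [N_c_zero]
      have hs : (L + 1).choose (L + 1 + 0 - p) = (L + 1).choose p := by
        have : L + 1 + 0 - p = (L + 1) - p := by omega
        rw [this, Nat.choose_symm (by omega)]
      rw [hs]
      simp
    | c + 1 =>
      match p with
      | 0 =>
        rw [N_rec_zero, ih (c + 2) 0 (by omega)]
        rw [Nat.choose_eq_zero_of_lt (show L < L + (c + 2) - 0 by omega),
          Nat.choose_eq_zero_of_lt (show L + 1 < L + 1 + (c + 1) - 0 by omega)]
        simp
      | p + 1 =>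
        have hp' : p ≤ L + c := by omega
        rw [N_rec_succ, Nat.cast_add, ih c p (by omega), ih (c + 2) (p + 1) (by omega)]
        have e1 : (L + 1).choose (p + 1) = L.choose p + L.choose (p + 1) :=
          Nat.choose_succ_succ _ _
        have i1 : L + 1 + (c + 1) - (p + 1) = (L + c - p) + 1 := by omega
        have i2 : L + (c + 2) - (p + 1) = (L + c - p) + 1 := by omega
        have e2 : (L + 1).choose ((L + c - p) + 1)
            = L.choose (L + c - p) + L.choose ((L + c - p) + 1) :=
          Nat.choose_succ_succ _ _
        rw [i1, i2, e1, e2]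
        push_cast
        ring

lemma N_eq_natCard (c L p : ℕ) :
    N c L p = Nat.card {s : Fin L → Bool // cnt s true L = p ∧ Ok c s} := by
  classical
  rw [Nat.card_eq_fintype_card, Fintype.card_subtype]
  unfold N
  congr 1

lemma pathPos_fst (A : ℤ × ℤ) {L : ℕ} (s : Fin L → Bool) (t : ℕ) :
    (pathPos A s t).1 = A.1 + (cnt s true t : ℤ) := rfl

lemma pathPos_snd (A : ℤ × ℤ) {L : ℕ} (s : Fin L → Bool) (t : ℕ) :
    (pathPos A s t).2 = A.2 + (cnt s false t : ℤ) := rfl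

end ConvCatAux

open ConvCatAux in
/-- `C_{K,i+j+M}` counts lattice paths from `A_i = (-i-M, -i-M-K+1)` to
`B_j = (j,j)` never touching the line `y = x - K`, provided
`2(i+j+M)+K-1 ≥ 0`. -/
theorem convCatalan_eq_card_paths (K : ℕ) (hK : 1 ≤ K) (M : ℤ) (i j : ℕ)
    (h : 0 ≤ 2 * ((i : ℤ) + j + M) + K - 1) :
    convCatalanZ K ((i : ℤ) + j + M) =
      (Nat.card { s : Fin (2 * ((i : ℤ) + j + M) + K - 1).toNat → Bool //
        pathPos (-(i : ℤ) - M, -(i : ℤ) - M - K + 1) s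
            (2 * ((i : ℤ) + j + M) + K - 1).toNat = ((j : ℤ), (j : ℤ)) ∧
        ∀ t ≤ (2 * ((i : ℤ) + j + M) + K - 1).toNat,
          (pathPos (-(i : ℤ) - M, -(i : ℤ) - M - K + 1) s t).2 ≠
            (pathPos (-(i : ℤ) - M, -(i : ℤ) - M - K + 1) s t).1 - K } : ℤ) := by
  classical
  by_cases hneg : (i : ℤ) + j + M < 0
  · rw [convCatalanZ, if_pos hneg]
    have he : IsEmpty { s : Fin (2 * ((i : ℤ) + j + M) + K - 1).toNat → Bool //
        pathPos (-(i : ℤ) - M, -(i : ℤ) - M - K + 1) s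
            (2 * ((i : ℤ) + j + M) + K - 1).toNat = ((j : ℤ), (j : ℤ)) ∧
        ∀ t ≤ (2 * ((i : ℤ) + j + M) + K - 1).toNat,
          (pathPos (-(i : ℤ) - M, -(i : ℤ) - M - K + 1) s t).2 ≠
            (pathPos (-(i : ℤ) - M, -(i : ℤ) - M - K + 1) s t).1 - K } := by
      constructor
      rintro ⟨s, hend, -⟩
      have h1 := congrArg Prod.fst hend
      rw [pathPos_fst] at h1
      simp only at h1
      omega
    rw [Nat.card_of_isEmpty]
    simp
  · push_neg at hneg
    set p : ℕ := ((i : ℤ) + j + M).toNat with hp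
    have hpz : (p : ℤ) = (i : ℤ) + j + M := by omega
    have hL : (2 * ((i : ℤ) + j + M) + K - 1).toNat = 2 * p + K - 1 := by omega
    rw [convCatalanZ, if_neg (by omega), hL]
    have hiff : ∀ s : Fin (2 * p + K - 1) → Bool,
        (pathPos (-(i : ℤ) - M, -(i : ℤ) - M - K + 1) s (2 * p + K - 1) = ((j : ℤ), (j : ℤ)) ∧
          ∀ t ≤ 2 * p + K - 1,
            (pathPos (-(i : ℤ) - M, -(i : ℤ) - M - K + 1) s t).2 ≠
              (pathPos (-(i : ℤ) - M, -(i : ℤ) - M - K + 1) s t).1 - K)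
        ↔ (cnt s true (2 * p + K - 1) = p ∧ Ok 1 s) := by
      intro s
      have hsum := cnt_true_add_false s
      rw [Prod.ext_iff, pathPos_fst, pathPos_snd]
      simp only
      constructor
      · rintro ⟨⟨he1, he2⟩, havoid⟩
        refine ⟨by omega, fun t ht => ?_⟩
        have h2 := havoid t ht
        rw [pathPos_fst, pathPos_snd] at h2
        simp only at h2
        omega
      · rintro ⟨hcnt, hok⟩
        refine ⟨⟨by omega, by omega⟩, fun t ht => ?_⟩
        have h2 := hok t ht
        rw [pathPos_fst, pathPos_snd]
        simp only
        omega
    have key : Nat.card { s : Fin (2 * p + K - 1) → Bool //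
        pathPos (-(i : ℤ) - M, -(i : ℤ) - M - K + 1) s (2 * p + K - 1) = ((j : ℤ), (j : ℤ)) ∧
        ∀ t ≤ 2 * p + K - 1,
          (pathPos (-(i : ℤ) - M, -(i : ℤ) - M - K + 1) s t).2 ≠
            (pathPos (-(i : ℤ) - M, -(i : ℤ) - M - K + 1) s t).1 - K }
        = N 1 (2 * p + K - 1) p := by
      rw [N_eq_natCard]
      exact Nat.card_congr (Equiv.subtypeEquivRight hiff)
    rw [key, N_eq (2 * p + K - 1) 1 p (by omega)]
    unfold convCatalan
    rw [← hp]
    by_cases hp0 : p = 0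
    · rw [if_pos hp0, hp0,
        Nat.choose_eq_zero_of_lt (show 2 * 0 + K - 1 < 2 * 0 + K - 1 + 1 - 0 by omega)]
      simp
    · rw [if_neg hp0]
      have h3 : 2 * p + K - 1 + 1 - p = (2 * p + K - 1) - (p - 1) := by omega
      rw [h3, Nat.choose_symm (by omega)]
end

section
/- (Cigler's even identity, vanishing part) For all k, m ≥ 1 and 1 ≤ N ≤ m+k-1, the Hankel determinant D_{2k, 1-k-m}(N) := det(C_{2k, i+j+1-k-m})_{i,j=0}^{N-1} equals 0. -/
/-- The Hankel determinant `D_{K,M}(N) = det(C_{K,i+j+M})_{i,j=0}^{N-1}`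
(equal to `1` for `N = 0`). -/
def hankelDet (K : ℕ) (M : ℤ) (N : ℕ) : ℤ :=
  Matrix.det (Matrix.of fun i j : Fin N => convCatalanZ K ((i : ℕ) + (j : ℕ) + M))

/-- Cigler's even identity, vanishing part. -/
theorem cigler_even_vanishing (k m : ℕ) (hk : 1 ≤ k) (hm : 1 ≤ m)
    (N : ℕ) (hN1 : 1 ≤ N) (hN2 : N ≤ m + k - 1) :
    hankelDet (2 * k) (1 - (k : ℤ) - m) N = 0 := by
  unfold hankelDet
  apply Matrix.det_eq_zero_of_row_eq_zero ⟨0, by omega⟩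
  intro j
  have hj : (j : ℕ) < N := j.2
  simp only [Matrix.of_apply, convCatalanZ]
  rw [if_pos (by push_cast; omega)]
end

section
/- (Cigler's odd identity, vanishing part) For all k, m ≥ 1 and 1 ≤ N ≤ m+k-2, the Hankel determinant D_{2k-1, 2-k-m}(N) := det(C_{2k-1, i+j+2-k-m})_{i,j=0}^{N-1} equals 0. -/
/-- Cigler's odd identity, vanishing part. -/
theorem cigler_odd_vanishing (k m : ℕ) (hk : 1 ≤ k) (hm : 1 ≤ m)
    (N : ℕ) (hN1 : 1 ≤ N) (hN2 : N ≤ m + k - 2) :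
    hankelDet (2 * k - 1) (2 - (k : ℤ) - m) N = 0 := by
  unfold hankelDet
  apply Matrix.det_eq_zero_of_row_eq_zero ⟨0, hN1⟩
  intro j
  simp only [Matrix.of_apply]
  unfold convCatalanZ
  rw [if_pos]
  have hj : (j : ℕ) + 2 < k + m := by
    have := j.isLt; omega
  have : ((j:ℕ) : ℤ) + 2 < (k:ℤ) + m := by exact_mod_cast hj
  push_cast
  linarith
end

section
/- (Cigler's even identity) For all k, m ≥ 1 and n ≥ 0, det(C_{2k, i+j+1-k-m})_{i,j=0}^{n+m+k-1} = (-1)^{binom(m+k,2)} · det(C_{2k, i+j+1-k+m})_{i,j=0}^{n-1}, where an empty determinant equals 1. -/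
/-!
Write `C` for the Catalan series, so that `C = 1 + X C²`, `C (1 - X C) = 1` and the coefficients of
`C ^ K` are the `C_{K,p}`. The lower triangular Toeplitz matrices `L` of `C ^ (2k)` and `G` of
`(1 - X C) ^ (2k)`, of size `N + n` with `N = n + m + k`, are inverse to each other. After reversing
the first `N` columns and permuting rows accordingly, the leading `N × N` block of `L` is the Hankel
matrix on the left-hand side and the complementary trailing `n × n` block of `G` is minus the
Hankel matrix on the right-hand side: `X C` and `1 - X C` are the roots of `t² - t + X`, so the
coefficients of `(X C) ^ j + (1 - X C) ^ j` vanish beyond degree `j / 2`, and the high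
coefficients of `(1 - X C) ^ (2k)` are those of `-X ^ (2k) C ^ (2k)`. Jacobi's complementary minor
identity `det A · det (A⁻¹)₂₂ = det A₁₁` then gives the theorem; the sign is that of the reversal
of `Fin (N + n)`.
-/

open PowerSeries Matrix Equiv

theorem Fin.sign_revPerm (n : ℕ) :
    Perm.sign (Fin.revPerm : Perm (Fin n)) = (-1) ^ n.choose 2 := by
  induction n with
  | zero => rfl
  | succ n ih =>
    have hdecomp : (Fin.revPerm : Perm (Fin (n + 1))) =
        Perm.decomposeFin.symm (0, Fin.revPerm) * finRotate (n + 1) := by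
      ext i
      induction i using Fin.lastCases with
      | last => simp
      | cast j =>
        simp only [Fin.revPerm_apply, Perm.coe_mul, Function.comp_apply, finRotate_apply,
          Fin.coeSucc_eq_succ, Perm.decomposeFin_symm_apply_succ, swap_self, refl_apply,
          Fin.val_rev, Fin.val_succ, Fin.val_castSucc]
        omega
    rw [hdecomp, Perm.sign_mul, Perm.decomposeFin.symm_sign, ih, sign_finRotate,
      Nat.choose_succ_succ', Nat.choose_one_right, pow_add]
    simp [mul_comm]

theorem Nat.choose_two_add_two_mul (t n : ℕ) :
    (t + 2 * n).choose 2 + n = t.choose 2 + 2 * (n * (n + t)) := by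
  induction n with
  | zero => simp
  | succ n ih =>
    rw [show t + 2 * (n + 1) = t + 2 * n + 1 + 1 by ring, Nat.choose_succ_succ',
      Nat.choose_succ_succ' _ 1, Nat.choose_one_right, Nat.choose_one_right]
    linarith

theorem neg_one_pow_choose_two_add_two_mul {M : Type*} [Monoid M] [HasDistribNeg M] (t n : ℕ) :
    (-1 : M) ^ (t + 2 * n).choose 2 * (-1) ^ n = (-1) ^ t.choose 2 := by
  rw [← pow_add, Nat.choose_two_add_two_mul, pow_add, pow_mul, neg_one_sq, one_pow, mul_one]

theorem Matrix.det_mul_det_toBlocks₂₂_of_mul_eq_one {m n R : Type*} [Fintype m] [Fintype n]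
    [DecidableEq m] [DecidableEq n] [CommRing R] {A B : Matrix (m ⊕ n) (m ⊕ n) R}
    (hAB : A * B = 1) : A.det * B.toBlocks₂₂.det = A.toBlocks₁₁.det := by
  have hblocks := hAB
  rw [← fromBlocks_toBlocks A, ← fromBlocks_toBlocks B, fromBlocks_multiply, ← fromBlocks_one,
    fromBlocks_inj] at hblocks
  have hfactor : A * fromBlocks 1 B.toBlocks₁₂ 0 B.toBlocks₂₂ =
      fromBlocks A.toBlocks₁₁ 0 A.toBlocks₂₁ 1 := by
    conv_lhs => rw [← fromBlocks_toBlocks A]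
    rw [fromBlocks_multiply, hblocks.2.1, hblocks.2.2.2]
    simp
  simpa [det_fromBlocks_zero₂₁, det_fromBlocks_zero₁₂] using congrArg det hfactor

theorem Matrix.det_submatrix_trans_revPerm {ι R : Type*} [Fintype ι] [DecidableEq ι] [CommRing R]
    {T : ℕ} (A : Matrix (Fin T) (Fin T) R) (e : ι ≃ Fin T) :
    (A.submatrix (e.trans Fin.revPerm) e).det = (-1) ^ T.choose 2 * A.det := by
  rw [show A.submatrix (e.trans Fin.revPerm) e = (A.submatrix Fin.revPerm id).submatrix e e from rfl,
    det_submatrix_equiv_self, det_permute, Fin.sign_revPerm]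
  push_cast
  rfl

section LowerToeplitz

variable {R : Type*} [CommRing R]

noncomputable def lowerToeplitz (φ : R⟦X⟧) (T : ℕ) : Matrix (Fin T) (Fin T) R :=
  of fun a b => if b ≤ a then coeff ((a : ℕ) - b) φ else 0

theorem lowerToeplitz_mul (φ ψ : R⟦X⟧) (T : ℕ) :
    lowerToeplitz φ T * lowerToeplitz ψ T = lowerToeplitz (φ * ψ) T := by
  ext a b
  simp only [lowerToeplitz, mul_apply, of_apply, Fin.le_def]
  rw [Fin.sum_univ_eq_sum_range (fun c => (if c ≤ (a : ℕ) then coeff ((a : ℕ) - c) φ else 0) *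
    if (b : ℕ) ≤ c then coeff (c - b) ψ else 0)]
  split_ifs with hba
  · rw [← Finset.sum_subset (s₁ := Finset.Ico (b : ℕ) (a + 1)), Finset.sum_Ico_eq_sum_range,
      mul_comm φ, coeff_mul, Finset.Nat.sum_antidiagonal_eq_sum_range_succ
        (fun i j => coeff i ψ * coeff j φ), show (a : ℕ) + 1 - b = (a - b : ℕ) + 1 by omega]
    · refine Finset.sum_congr rfl fun j hj => ?_
      rw [Finset.mem_range] at hj
      rw [if_pos (by omega), if_pos (by omega), mul_comm, Nat.add_sub_cancel_left,
        Nat.sub_sub]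
    · intro c hc
      simp only [Finset.mem_Ico, Finset.mem_range] at hc ⊢
      omega
    · intro c _ hc
      rw [Finset.mem_Ico] at hc
      split_ifs <;> first | omega | simp
  · refine Finset.sum_eq_zero fun c _ => ?_
    split_ifs <;> first | omega | simp

theorem lowerToeplitz_one (T : ℕ) : lowerToeplitz (1 : R⟦X⟧) T = 1 := by
  ext a b
  simp only [lowerToeplitz, of_apply, coeff_one, one_apply, Fin.le_def, Fin.ext_iff]
  split_ifs <;> first | omega | rfl

theorem det_lowerToeplitz (φ : R⟦X⟧) (T : ℕ) :
    (lowerToeplitz φ T).det = constantCoeff φ ^ T := by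
  rw [det_of_isLowerTriangular (lowerToeplitz φ T) fun a b (hab : a < b) => if_neg hab.not_ge]
  simp [lowerToeplitz]

end LowerToeplitz

local notation "𝒞" => PowerSeries.map (Nat.castRingHom ℤ) catalanSeries

theorem map_catalanSeries_eq : (𝒞 : ℤ⟦X⟧) = 1 + X * 𝒞 ^ 2 := by
  conv_lhs => rw [← catalanSeries_sq_mul_X_add_one]
  simp only [map_add, map_mul, map_pow, map_X, map_one]
  ring

theorem constantCoeff_map_catalanSeries : constantCoeff (𝒞 : ℤ⟦X⟧) = 1 := by
  rw [← coeff_zero_eq_constantCoeff_apply, coeff_map, catalanSeries_coeff, catalan_zero, map_one]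

theorem map_catalanSeries_mul_one_sub_X_mul : (𝒞 : ℤ⟦X⟧) * (1 - X * 𝒞) = 1 := by
  linear_combination map_catalanSeries_eq

theorem convCatalan_zero (K : ℕ) : convCatalan K 0 = 1 := by
  simp [convCatalan]

theorem convCatalan_succ (K p : ℕ) :
    convCatalan K (p + 1) = ((2 * p + K + 1).choose (p + 1) : ℤ) - (2 * p + K + 1).choose p := by
  simp [convCatalan, show 2 * (p + 1) + K - 1 = 2 * p + K + 1 by omega]

theorem convCatalan_zero_succ (p : ℕ) : convCatalan 0 (p + 1) = 0 := by
  rw [convCatalan_succ, add_zero, ← Nat.choose_symm_half, sub_self]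

theorem convCatalan_succ_succ (K p : ℕ) :
    convCatalan (K + 1) (p + 1) = convCatalan K (p + 1) + convCatalan (K + 2) p := by
  rcases p with _ | q
  · rw [convCatalan_succ, convCatalan_succ, convCatalan_zero]
    simp [Nat.choose_succ_succ', add_comm]
  · simp only [convCatalan_succ]
    rw [show 2 * (q + 1) + (K + 1) + 1 = 2 * q + K + 3 + 1 by ring,
      show 2 * (q + 1) + K + 1 = 2 * q + K + 3 by ring,
      show 2 * q + (K + 2) + 1 = 2 * q + K + 3 by ring,
      Nat.choose_succ_succ' (2 * q + K + 3) (q + 1), Nat.choose_succ_succ' (2 * q + K + 3) q]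
    push_cast
    ring

theorem coeff_map_catalanSeries_pow (K p : ℕ) : coeff p (𝒞 ^ K) = convCatalan K p := by
  induction p generalizing K with
  | zero => simp [convCatalan_zero, constantCoeff_map_catalanSeries]
  | succ p ih =>
    induction K with
    | zero => simp [convCatalan_zero_succ]
    | succ K ihK =>
      have hsplit : (𝒞 : ℤ⟦X⟧) ^ (K + 1) = 𝒞 ^ K + X * 𝒞 ^ (K + 2) := calc
        _ = 𝒞 ^ K * (1 + X * 𝒞 ^ 2) := by rw [← map_catalanSeries_eq, pow_succ]
        _ = _ := by ring
      rw [hsplit, map_add, coeff_succ_X_mul, ihK, ih, convCatalan_succ_succ]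

theorem convCatalanZ_natCast_sub (K a b : ℕ) :
    convCatalanZ K ((a : ℤ) - b) = if b ≤ a then coeff (a - b) (𝒞 ^ K) else 0 := by
  unfold convCatalanZ
  split_ifs with hneg hle hle
  · omega
  · rfl
  · rw [coeff_map_catalanSeries_pow]
    congr
    omega
  · omega

theorem coeff_pow_add_pow_eq_zero {R : Type*} [CommRing R] {u d : R⟦X⟧} (hsum : u + d = 1)
    (hprod : u * d = X) {j p : ℕ} (hjp : j < 2 * p) : coeff p (u ^ j + d ^ j) = 0 := by
  induction j using Nat.strong_induction_on generalizing p with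
  | _ j ih =>
    match j, p with
    | 0, p + 1 => simp
    | 1, p + 1 => simp [hsum]
    | j + 2, p + 1 =>
      have hrec : u ^ (j + 2) + d ^ (j + 2) = (u ^ (j + 1) + d ^ (j + 1)) - X * (u ^ j + d ^ j) := by
        rw [← hprod, ← mul_one (u ^ (j + 1) + d ^ (j + 1)), ← hsum]
        ring
      rw [hrec, map_sub, coeff_succ_X_mul, ih (j + 1) (by omega) (by omega),
        ih j (by omega) (by omega), sub_zero]

theorem coeff_one_sub_X_mul_map_catalanSeries_pow {j p : ℕ} (hjp : j < 2 * p) :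
    coeff p ((1 - X * 𝒞) ^ j) = -convCatalanZ j ((p : ℤ) - j) := by
  have hprod : X * 𝒞 * (1 - X * 𝒞) = X := by
    linear_combination X * map_catalanSeries_eq
  have h := coeff_pow_add_pow_eq_zero (add_sub_cancel (X * 𝒞) 1) hprod hjp
  rw [map_add, mul_pow, coeff_X_pow_mul', ← convCatalanZ_natCast_sub] at h
  linear_combination h

theorem lowerToeplitz_map_catalanSeries_pow_apply (K T : ℕ) (a b : Fin T) :
    lowerToeplitz (𝒞 ^ K) T a b = convCatalanZ K ((a : ℤ) - b) := by
  rw [convCatalanZ_natCast_sub]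
  rfl

def finSumFinRevEquiv (N n : ℕ) : Fin N ⊕ Fin n ≃ Fin (N + n) :=
  (Equiv.sumCongr Fin.revPerm (Equiv.refl _)).trans finSumFinEquiv

theorem det_toBlocks₁₁_submatrix_lowerToeplitz (K N n : ℕ) :
    ((lowerToeplitz (𝒞 ^ K) (N + n)).submatrix ((finSumFinRevEquiv N n).trans Fin.revPerm)
      (finSumFinRevEquiv N n)).toBlocks₁₁.det = hankelDet K ((n : ℤ) + 1 - N) N := by
  unfold hankelDet
  congr 1
  ext i j
  simp only [toBlocks₁₁, finSumFinRevEquiv, coe_trans, submatrix_apply, Function.comp_apply,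
    sumCongr_apply, Sum.map_inl, Fin.revPerm_apply, finSumFinEquiv_apply_left,
    lowerToeplitz_map_catalanSeries_pow_apply, Fin.val_rev, Fin.val_castAdd, of_apply]
  congr 1
  omega

theorem toBlocks₂₂_submatrix_lowerToeplitz {J N n : ℕ} (h : J + 2 * n ≤ 2 * N + 1) :
    ((lowerToeplitz ((1 - X * 𝒞) ^ J) (N + n)).submatrix (finSumFinRevEquiv N n)
      ((finSumFinRevEquiv N n).trans Fin.revPerm)).toBlocks₂₂ =
      -of fun i j : Fin n => convCatalanZ J ((i : ℕ) + (j : ℕ) + ((N : ℤ) + 1 - n - J)) := by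
  ext i j
  simp only [toBlocks₂₂, lowerToeplitz, finSumFinRevEquiv, coe_trans, submatrix_apply,
    Function.comp_apply, sumCongr_apply, coe_refl, Sum.map_inr, id_eq, finSumFinEquiv_apply_right,
    Fin.revPerm_apply, of_apply, Fin.val_natAdd, Fin.val_rev, Matrix.neg_apply]
  rw [if_pos (by simp only [Fin.le_def, Fin.val_rev, Fin.val_natAdd]; omega),
    coeff_one_sub_X_mul_map_catalanSeries_pow (by omega)]
  congr 2
  omega

theorem cigler_even_general (k m n : ℕ) :
    hankelDet (2 * k) (1 - (k : ℤ) - m) (n + m + k) =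
      (-1) ^ ((m + k).choose 2) * hankelDet (2 * k) (1 - (k : ℤ) + m) n := by
  set N := n + m + k
  set e := finSumFinRevEquiv N n
  set L := lowerToeplitz (𝒞 ^ (2 * k)) (N + n)
  set G := lowerToeplitz ((1 - X * 𝒞) ^ (2 * k)) (N + n)
  have hLG : L * G = 1 := by
    rw [lowerToeplitz_mul, ← mul_pow, map_catalanSeries_mul_one_sub_X_mul, one_pow,
      lowerToeplitz_one]
  have hJacobi := det_mul_det_toBlocks₂₂_of_mul_eq_one (A := L.submatrix (e.trans Fin.revPerm) e)
    (B := G.submatrix e (e.trans Fin.revPerm))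
    (by rw [submatrix_mul_equiv, hLG, submatrix_one_equiv])
  rw [det_submatrix_trans_revPerm, det_lowerToeplitz, map_pow, constantCoeff_map_catalanSeries,
    one_pow, one_pow, mul_one, toBlocks₂₂_submatrix_lowerToeplitz (by omega), det_neg,
    Fintype.card_fin, det_toBlocks₁₁_submatrix_lowerToeplitz] at hJacobi
  have hM₁ : (n : ℤ) + 1 - (N : ℕ) = 1 - k - m := by push_cast [N]; ring
  have hM₂ : ((N : ℕ) : ℤ) + 1 - n - (2 * k : ℕ) = 1 - k + m := by push_cast [N]; ring
  rw [← hM₁, ← hJacobi, hankelDet, hM₂, ← mul_assoc, show N + n = (m + k) + 2 * n by omega,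
    neg_one_pow_choose_two_add_two_mul]

/-- Cigler's even identity. -/
theorem cigler_even (k m n : ℕ) (hk : 1 ≤ k) (hm : 1 ≤ m) :
    hankelDet (2 * k) (1 - (k : ℤ) - m) (n + m + k) =
      (-1) ^ ((m + k).choose 2) * hankelDet (2 * k) (1 - (k : ℤ) + m) n :=
  cigler_even_general k m n
end

section
/- (Cigler's conjecture, case k=1, even) For all m ≥ 1 and n ≥ 0, det(C_{2, i+j-m})_{i,j=0}^{n+m} = (-1)^{binom(m+1,2)} · det(C_{2, i+j+m})_{i,j=0}^{n-1}, where an empty determinant equals 1. -/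
/-- `C_{2,p} = binom(2p+1,p) - binom(2p+1,p-1)` for `p ≥ 0`, and `0` for `p < 0`
(with the convention `binom(n,-1) = 0`). -/
def convCatalanTwo (p : ℤ) : ℤ :=
  if p < 0 then 0
  else ((2 * p.toNat + 1).choose p.toNat : ℤ) -
    (if p = 0 then 0 else ((2 * p.toNat + 1).choose (p.toNat - 1) : ℤ))

open Matrix Finset

section DJ
variable {R : Type*} [CommRing R]

private lemma succAbove_one_val {n : ℕ} (k : Fin (n+2)) :
    (((1 : Fin (n+3)).succAbove k) : ℕ) = if (k:ℕ) = 0 then 0 else (k:ℕ)+1 := by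
  by_cases h : (k:ℕ) = 0
  · rw [if_pos h, Fin.succAbove_of_castSucc_lt]
    · simp [h]
    · simp [Fin.lt_def, h]
  · rw [if_neg h, Fin.succAbove_of_le_castSucc]
    · simp [Fin.val_succ]
    · simp [Fin.le_def]; omega

private lemma det_two_outer_cols :
    ∀ (n : ℕ) (v w : Fin (n+2) → R),
    (Matrix.of fun i k : Fin (n+2) =>
      if k = 0 then v i else if k = Fin.last (n+1) then w i
      else if (i : ℕ) = (k : ℕ) then 1 else 0).det
      = v 0 * w (Fin.last (n+1)) - v (Fin.last (n+1)) * w 0 := by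
  intro n
  induction n with
  | zero =>
    intro v w
    rw [show ((Fin.last 1 : Fin 2)) = 1 from rfl, Matrix.det_fin_two]
    norm_num
    ring
  | succ n ih =>
    intro v w
    have h10 : (1 : Fin (n+3)) ≠ 0 := by simp [Fin.ext_iff]
    have h1l : (1 : Fin (n+3)) ≠ Fin.last (n+2) := by
      simp [Fin.ext_iff]
    have e00 : (1 : Fin (n+3)).succAbove 0 = 0 :=
      Fin.succAbove_ne_zero_zero h10
    rw [Matrix.det_succ_column _ 1, Finset.sum_eq_single 1]
    · have h11 : (Matrix.of fun i k : Fin (n+3) =>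
          if k = 0 then v i else if k = Fin.last (n+2) then w i
          else if (i : ℕ) = (k : ℕ) then 1 else 0) 1 1 = 1 := by
        simp [h10, h1l]
      rw [h11]
      have hsub : ((Matrix.of fun i k : Fin (n+3) =>
          if k = 0 then v i else if k = Fin.last (n+2) then w i
          else if (i : ℕ) = (k : ℕ) then 1 else 0).submatrix
            ((1 : Fin (n+3)).succAbove) ((1 : Fin (n+3)).succAbove))
          = Matrix.of (fun i k : Fin (n+2) =>
            if k = 0 then (v ∘ (1 : Fin (n+3)).succAbove) i
            else if k = Fin.last (n+1) then (w ∘ (1 : Fin (n+3)).succAbove) i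
            else if (i : ℕ) = (k : ℕ) then 1 else 0) := by
        ext i k
        have hz : ((1 : Fin (n+3)).succAbove k = 0) ↔ (k = 0) :=
          Fin.succAbove_eq_zero_iff h10
        have hval := succAbove_one_val (n := n) k
        have hvali := succAbove_one_val (n := n) i
        have hl : ((1 : Fin (n+3)).succAbove k = Fin.last (n+2)) ↔ (k = Fin.last (n+1)) := by
          rw [Fin.ext_iff, Fin.ext_iff, Fin.val_last, Fin.val_last, hval]
          have := k.isLt
          split <;> omega
        have hvv : (((1 : Fin (n+3)).succAbove i : ℕ) = ((1 : Fin (n+3)).succAbove k : ℕ))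
            ↔ ((i:ℕ) = (k:ℕ)) := by
          rw [hval, hvali]
          split <;> split <;> omega
        simp only [Matrix.submatrix_apply, Matrix.of_apply]
        by_cases h0 : k = 0
        · simp [h0, e00]
        · have h0' : ¬ ((1 : Fin (n+3)).succAbove k = 0) := fun hc => h0 (hz.mp hc)
          by_cases hL : k = Fin.last (n+1)
          · subst hL
            simp [h0', hl.mpr rfl]
          · have hL' : ¬ ((1 : Fin (n+3)).succAbove k = Fin.last (n+2)) :=
              fun hc => hL (hl.mp hc)
            simp [h0, h0', hL, hL', hvv]
      rw [hsub, ih]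
      have eL : (1 : Fin (n+3)).succAbove (Fin.last (n+1)) = Fin.last (n+2) := by
        ext
        rw [succAbove_one_val]
        simp [Fin.val_last]
      simp [e00, eL]
    · intro i _ hi
      have hvi : (i : ℕ) ≠ 1 := by
        simpa [Fin.ext_iff] using hi
      have : (Matrix.of fun i k : Fin (n+3) =>
          if k = 0 then v i else if k = Fin.last (n+2) then w i
          else if (i : ℕ) = (k : ℕ) then 1 else 0) i 1 = 0 := by
        simp [h10, h1l, hvi]
      rw [this]
      ring
    · intro h
      exact absurd (Finset.mem_univ _) h

end DJ

section DJ2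
variable {R : Type*} [CommRing R]

private lemma det_two_basis_cols {n : ℕ} (A : Matrix (Fin (n+2)) (Fin (n+2)) R) (a b : R) :
    (Matrix.of fun i k : Fin (n+2) =>
      if k = 0 then (if i = 0 then a else 0)
      else if k = Fin.last (n+1) then (if i = Fin.last (n+1) then b else 0)
      else A i k).det
    = a * b * (A.submatrix (fun i : Fin n => i.castSucc.succ)
        (fun i : Fin n => i.castSucc.succ)).det := by
  rw [Matrix.det_succ_column_zero, Finset.sum_eq_single 0]
  · simp only [Matrix.of_apply, if_pos rfl, Fin.val_zero, pow_zero, one_mul]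
    rw [Fin.succAbove_zero]
    have hM' : ((Matrix.of fun i k : Fin (n+2) =>
        if k = 0 then (if i = 0 then a else 0)
        else if k = Fin.last (n+1) then (if i = Fin.last (n+1) then b else 0)
        else A i k).submatrix Fin.succ Fin.succ)
        = Matrix.of (fun i k : Fin (n+1) =>
          if k = Fin.last n then (if i = Fin.last n then b else 0)
          else A i.succ k.succ) := by
      ext i k
      have h0 : (k.succ : Fin (n+2)) ≠ 0 := Fin.succ_ne_zero k
      have hL : (k.succ = Fin.last (n+1)) ↔ (k = Fin.last n) := Fin.succ_eq_last_succ
      have hLi : (i.succ = Fin.last (n+1)) ↔ (i = Fin.last n) := Fin.succ_eq_last_succ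
      by_cases hk : k = Fin.last n
      · simp [h0, hk, hL.mpr hk, hLi]
      · have : ¬ (k.succ = Fin.last (n+1)) := fun hc => hk (hL.mp hc)
        simp [h0, hk, this]
    rw [hM']
    rw [Matrix.det_succ_column _ (Fin.last n), Finset.sum_eq_single (Fin.last n)]
    · simp only [Matrix.of_apply, if_pos rfl]
      have hsign : ((-1 : R)) ^ ((Fin.last n : ℕ) + (Fin.last n : ℕ)) = 1 :=
        Even.neg_one_pow ⟨(Fin.last n : ℕ), by ring⟩
      rw [hsign]
      have hsub : ((Matrix.of (fun i k : Fin (n+1) =>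
          if k = Fin.last n then (if i = Fin.last n then b else 0)
          else A i.succ k.succ)).submatrix (Fin.last n).succAbove (Fin.last n).succAbove)
          = A.submatrix (fun i : Fin n => i.castSucc.succ) (fun i : Fin n => i.castSucc.succ) := by
        rw [Fin.succAbove_last]
        ext i k
        have : (k.castSucc : Fin (n+1)) ≠ Fin.last n := (Fin.castSucc_lt_last k).ne
        simp [this]
      rw [hsub]
      have h0L : (0 : Fin (n+2)) ≠ Fin.last (n+1) := by simp [Fin.ext_iff]
      simp [h0L]
      ring
    · intro i _ hi
      have : (Matrix.of (fun i k : Fin (n+1) =>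
          if k = Fin.last n then (if i = Fin.last n then b else 0)
          else A i.succ k.succ)) i (Fin.last n) = 0 := by
        simp [hi]
      rw [this]
      ring
    · intro h; exact absurd (Finset.mem_univ _) h
  · intro i _ hi
    simp [hi]
  · intro h; exact absurd (Finset.mem_univ _) h

private lemma dj_aux {n : ℕ} (A : Matrix (Fin (n+2)) (Fin (n+2)) R) :
    A.det * (A.det * (A.submatrix (fun i : Fin n => i.castSucc.succ)
        (fun i : Fin n => i.castSucc.succ)).det)
    = A.det * ((A.submatrix Fin.castSucc Fin.castSucc).det * (A.submatrix Fin.succ Fin.succ).det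
      - (A.submatrix Fin.castSucc Fin.succ).det * (A.submatrix Fin.succ Fin.castSucc).det) := by
  set L := Fin.last (n+1) with hLdef
  have hL0 : L ≠ (0 : Fin (n+2)) := by simp [hLdef, Fin.ext_iff]
  set C : Matrix (Fin (n+2)) (Fin (n+2)) R := Matrix.of (fun j k =>
    if k = 0 then A.adjugate j 0 else if k = L then A.adjugate j L
    else if (j:ℕ) = (k:ℕ) then 1 else 0) with hC
  have hAC : A * C = Matrix.of (fun i k : Fin (n+2) =>
      if k = 0 then (if i = 0 then A.det else 0)
      else if k = L then (if i = L then A.det else 0)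
      else A i k) := by
    ext i k
    rw [Matrix.mul_apply]
    by_cases h0 : k = 0
    · subst h0
      have hsum : ∑ j, A i j * C j 0 = (A * A.adjugate) i 0 := by
        rw [Matrix.mul_apply]
        refine Finset.sum_congr rfl fun j _ => ?_
        simp [hC]
      rw [hsum, Matrix.mul_adjugate]
      by_cases hi : i = 0 <;> simp [hi, Matrix.one_apply]
    · by_cases hLk : k = L
      · subst hLk
        have hsum : ∑ j, A i j * C j L = (A * A.adjugate) i L := by
          rw [Matrix.mul_apply]
          refine Finset.sum_congr rfl fun j _ => ?_
          simp [hC, hL0]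
        rw [hsum, Matrix.mul_adjugate]
        by_cases hi : i = L <;> simp [hi, hL0, Matrix.one_apply]
      · have hsum : ∑ j, A i j * C j k = A i k := by
          have hterm : ∀ j, A i j * C j k = if j = k then A i j else 0 := by
            intro j
            simp only [hC, Matrix.of_apply, if_neg h0, if_neg hLk, Fin.val_inj]
            by_cases hj : j = k <;> simp [hj]
          simp only [hterm]
          simp
        rw [hsum]
        simp [h0, hLk]
  have hdetAC : A.det * C.det = A.det * A.det * (A.submatrix (fun i : Fin n => i.castSucc.succ)
      (fun i : Fin n => i.castSucc.succ)).det := by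
    rw [← Matrix.det_mul, hAC, hLdef]
    exact det_two_basis_cols A A.det A.det
  have hdetC : C.det = A.adjugate 0 0 * A.adjugate L L - A.adjugate L 0 * A.adjugate 0 L := by
    rw [hC, hLdef]
    exact det_two_outer_cols n (fun j => A.adjugate j 0) (fun j => A.adjugate j (Fin.last (n+1)))
  have hadj00 : A.adjugate 0 0 = (A.submatrix Fin.succ Fin.succ).det := by
    rw [Matrix.adjugate_fin_succ_eq_det_submatrix]
    simp [Fin.succAbove_zero]
  have hadjLL : A.adjugate L L = (A.submatrix Fin.castSucc Fin.castSucc).det := by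
    rw [Matrix.adjugate_fin_succ_eq_det_submatrix, hLdef, Fin.succAbove_last]
    have hsgn : ((-1 : R)) ^ (((Fin.last (n+1) : Fin (n+2)) : ℕ)
        + ((Fin.last (n+1) : Fin (n+2)) : ℕ)) = 1 :=
      Even.neg_one_pow ⟨((Fin.last (n+1) : Fin (n+2)) : ℕ), by ring⟩
    rw [hsgn, one_mul]
  have e1 : A.adjugate L 0 = (-1:R)^(n+1) * (A.submatrix Fin.succ Fin.castSucc).det := by
    rw [Matrix.adjugate_fin_succ_eq_det_submatrix, hLdef, Fin.succAbove_zero, Fin.succAbove_last]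
    norm_num
  have e2 : A.adjugate 0 L = (-1:R)^(n+1) * (A.submatrix Fin.castSucc Fin.succ).det := by
    rw [Matrix.adjugate_fin_succ_eq_det_submatrix, hLdef, Fin.succAbove_zero, Fin.succAbove_last]
    norm_num
  have h1 : ((-1:R))^(n+1) * ((-1:R))^(n+1) = 1 := by
    rw [← pow_add]; exact Even.neg_one_pow ⟨n+1, by ring⟩
  generalize hgen : ((-1:R))^(n+1) = sg at e1 e2 h1
  have hdetC' : C.det = (A.submatrix Fin.succ Fin.succ).det
      * (A.submatrix Fin.castSucc Fin.castSucc).det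
      - (A.submatrix Fin.succ Fin.castSucc).det * (A.submatrix Fin.castSucc Fin.succ).det := by
    rw [hdetC, hadj00, hadjLL, e1, e2]
    linear_combination (-((A.submatrix Fin.succ Fin.castSucc).det
      * (A.submatrix Fin.castSucc Fin.succ).det)) * h1
  calc A.det * (A.det * (A.submatrix (fun i : Fin n => i.castSucc.succ)
      (fun i : Fin n => i.castSucc.succ)).det)
      = A.det * C.det := by linear_combination -hdetAC
    _ = _ := by rw [hdetC']; ring

end DJ2

private theorem desnanot_jacobi {R : Type*} [CommRing R] {n : ℕ}
    (A : Matrix (Fin (n+2)) (Fin (n+2)) R) :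
    A.det * (A.submatrix (fun i : Fin n => i.castSucc.succ)
        (fun i : Fin n => i.castSucc.succ)).det
    = (A.submatrix Fin.castSucc Fin.castSucc).det * (A.submatrix Fin.succ Fin.succ).det
      - (A.submatrix Fin.castSucc Fin.succ).det * (A.submatrix Fin.succ Fin.castSucc).det := by
  classical
  let X : Matrix (Fin (n+2)) (Fin (n+2)) (MvPolynomial ((Fin (n+2)) × (Fin (n+2))) ℤ) :=
    Matrix.of fun i j => MvPolynomial.X (i, j)
  have hXdet : X.det ≠ 0 := by
    intro h
    have h2 := congrArg (MvPolynomial.eval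
      (fun p : (Fin (n+2)) × (Fin (n+2)) => if p.1 = p.2 then (1:ℤ) else 0)) h
    rw [map_zero, RingHom.map_det, RingHom.mapMatrix_apply] at h2
    have hone : (X.map (MvPolynomial.eval
        fun p : (Fin (n+2)) × (Fin (n+2)) => if p.1 = p.2 then (1:ℤ) else 0))
        = (1 : Matrix (Fin (n+2)) (Fin (n+2)) ℤ) := by
      ext i j
      by_cases hij : i = j <;> simp [X, Matrix.one_apply, hij]
    rw [hone, Matrix.det_one] at h2
    exact one_ne_zero h2
  have hXdj := mul_left_cancel₀ hXdet (dj_aux X)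
  let φ : MvPolynomial ((Fin (n+2)) × (Fin (n+2))) ℤ →+* R :=
    MvPolynomial.eval₂Hom (Int.castRingHom R) (fun p => A p.1 p.2)
  have hmap : X.map φ = A := by
    ext i j
    simp [X, φ]
  have hφ := congrArg φ hXdj
  simpa [_root_.map_mul, map_sub, RingHom.map_det, RingHom.mapMatrix_apply,
    ← Matrix.submatrix_map, hmap] using hφ

section Ballot

private lemma pascal2 (n k : ℕ) :
    (n+2).choose (k+2) = n.choose k + 2*(n.choose (k+1)) + n.choose (k+2) := by
  rw [show n+2 = (n+1)+1 from rfl, Nat.choose_succ_succ' (n+1) (k+1),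
    Nat.choose_succ_succ' n k, Nat.choose_succ_succ' n (k+1)]
  ring

private def bal1 (i k : ℕ) : ℤ :=
  ((2*i+1).choose (i+k+1) : ℤ) - ((2*i+1).choose (i+k+2) : ℤ)

private def bal0 (i k : ℕ) : ℤ :=
  ((2*i).choose (i+k) : ℤ) - ((2*i).choose (i+k+1) : ℤ)

private lemma bal1_vanish (i k : ℕ) (h : i < k) : bal1 i k = 0 := by
  unfold bal1
  rw [Nat.choose_eq_zero_of_lt (by omega), Nat.choose_eq_zero_of_lt (by omega)]
  simp

private lemma bal0_vanish (i k : ℕ) (h : i < k) : bal0 i k = 0 := by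
  unfold bal0
  rw [Nat.choose_eq_zero_of_lt (by omega), Nat.choose_eq_zero_of_lt (by omega)]
  simp

private lemma csymm (i : ℕ) : ((2*i+1).choose i : ℤ) = (2*i+1).choose (i+1) := by
  have h := Nat.choose_symm (show i ≤ 2*i+1 by omega)
  rw [show 2*i+1-i = i+1 by omega] at h
  exact_mod_cast h.symm

private lemma bal1_recS (i k : ℕ) :
    bal1 (i+1) (k+1) = bal1 i k + 2*bal1 i (k+1) + bal1 i (k+2) := by
  have e1 : 2*(i+1)+1 = (2*i+1)+2 := by ring
  have e2 : (i+1)+(k+1)+1 = (i+k+1)+2 := by ring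
  have e3 : (i+1)+(k+1)+2 = (i+k+2)+2 := by ring
  unfold bal1
  rw [e1, e3, e2, pascal2, pascal2]
  simp only [show (i+k+1)+1 = i+k+2 by omega, show (i+k+1)+2 = i+k+3 by omega,
    show (i+k+2)+1 = i+k+3 by omega, show (i+k+2)+2 = i+k+4 by omega,
    show i+(k+1)+1 = i+k+2 by omega, show i+(k+1)+2 = i+k+3 by omega,
    show i+(k+2)+1 = i+k+3 by omega, show i+(k+2)+2 = i+k+4 by omega,
    show i+(k+1) = i+k+1 by omega, show i+(k+2) = i+k+2 by omega,
    show i+k+3+1 = i+k+4 by omega]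
  push_cast
  ring

private lemma bal1_rec0 (i : ℕ) : bal1 (i+1) 0 = 2*bal1 i 0 + bal1 i 1 := by
  have e1 : 2*(i+1)+1 = (2*i+1)+2 := by ring
  have e2 : (i+1)+0+1 = i+2 := by ring
  have e3 : (i+1)+0+2 = (i+1)+2 := by ring
  unfold bal1
  rw [e1, e2, e3, pascal2 (2*i+1) i, pascal2 (2*i+1) (i+1)]
  simp only [show (i+1)+1 = i+2 by omega, show (i+1)+2 = i+3 by omega,
    show i+0+1 = i+1 by omega, show i+0+2 = i+2 by omega, show i+2+1 = i+3 by omega]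
  push_cast
  linear_combination csymm i

private lemma bal0_recS (i k : ℕ) :
    bal0 (i+1) (k+1) = bal0 i k + 2*bal0 i (k+1) + bal0 i (k+2) := by
  have e1 : 2*(i+1) = (2*i)+2 := by ring
  have e2 : (i+1)+(k+1) = (i+k)+2 := by ring
  have e3 : (i+1)+(k+1)+1 = (i+k+1)+2 := by ring
  unfold bal0
  rw [e1, e3, e2, pascal2, pascal2]
  simp only [show (i+k)+1 = i+k+1 by omega, show (i+k)+2 = i+k+2 by omega,
    show (i+k+1)+1 = i+k+2 by omega, show (i+k+1)+2 = i+k+3 by omega,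
    show i+(k+1) = i+k+1 by omega, show i+(k+2) = i+k+2 by omega,
    show i+k+2+1 = i+k+3 by omega]
  push_cast
  ring

private lemma bal0_rec0 (i : ℕ) : bal0 (i+1) 0 = 1*bal0 i 0 + bal0 i 1 := by
  have e1 : 2*(i+1) = (2*i+1)+1 := by ring
  unfold bal0
  rw [e1]
  rw [show (i+1)+0 = i+1 by ring, show (i+1)+0+1 = (i+1)+1 by ring]
  rw [Nat.choose_succ_succ' (2*i+1) i, Nat.choose_succ_succ' (2*i+1) (i+1)]
  rw [show (2*i+1) = (2*i)+1 from rfl, Nat.choose_succ_succ' (2*i) i,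
    Nat.choose_succ_succ' (2*i) (i+1)]
  have hs : ((2*i+1).choose i : ℤ) = ((2*i).choose i : ℤ) + ((2*i).choose (i+1) : ℤ) := by
    rw [csymm i, show 2*i+1 = (2*i)+1 from rfl, Nat.choose_succ_succ' (2*i) i]
    push_cast
    ring
  simp only [show i+0 = i by omega, show i+0+1 = i+1 by omega,
    show i+1+1 = i+2 by omega]
  push_cast
  push_cast at hs
  linear_combination hs

end Ballot

section HankelSum

private lemma hankel_key (bal : ℕ → ℕ → ℤ) (c : ℤ)
    (h0 : ∀ i, bal (i+1) 0 = c * bal i 0 + bal i 1)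
    (hS : ∀ i k, bal (i+1) (k+1) = bal i k + 2 * bal i (k+1) + bal i (k+2))
    (hv : ∀ i k, i < k → bal i k = 0)
    (T x y : ℕ) (hx : x + 1 ≤ T) :
    (∑ k ∈ Finset.range (T+1), bal (x+1) k * bal y k)
    = c * (bal x 0 * bal y 0)
      + (∑ k ∈ Finset.range T, bal x k * bal y (k+1))
      + 2 * (∑ k ∈ Finset.range T, bal x (k+1) * bal y (k+1))
      + (∑ k ∈ Finset.range T, bal y k * bal x (k+1)) := by
  rw [Finset.sum_range_succ']
  have hterm : ∀ k, bal (x+1) (k+1) * bal y (k+1)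
      = bal x k * bal y (k+1) + 2*(bal x (k+1) * bal y (k+1))
        + bal x (k+2) * bal y (k+1) := by
    intro k; rw [hS]; ring
  rw [Finset.sum_congr rfl (fun k _ => hterm k), Finset.sum_add_distrib,
    Finset.sum_add_distrib, h0]
  have hshift : (∑ k ∈ Finset.range T, bal x (k+2) * bal y (k+1))
      = (∑ k ∈ Finset.range T, bal x (k+1) * bal y k) - bal x 1 * bal y 0 := by
    have h1 : (∑ k ∈ Finset.range (T+1), bal x (k+1) * bal y k)
        = (∑ k ∈ Finset.range T, bal x (k+2) * bal y (k+1)) + bal x 1 * bal y 0 := by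
      rw [Finset.sum_range_succ']
    have h2 : (∑ k ∈ Finset.range (T+1), bal x (k+1) * bal y k)
        = (∑ k ∈ Finset.range T, bal x (k+1) * bal y k) + bal x (T+1) * bal y T := by
      rw [Finset.sum_range_succ]
    rw [hv x (T+1) (by omega), zero_mul, add_zero] at h2
    omega
  rw [hshift]
  have hmul : (∑ k ∈ Finset.range T, bal x (k+1) * bal y k)
      = ∑ k ∈ Finset.range T, bal y k * bal x (k+1) :=
    Finset.sum_congr rfl (fun k _ => mul_comm _ _)
  rw [hmul, ← Finset.mul_sum]
  ring

private lemma hankel_swap (bal : ℕ → ℕ → ℤ) (c : ℤ)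
    (h0 : ∀ i, bal (i+1) 0 = c * bal i 0 + bal i 1)
    (hS : ∀ i k, bal (i+1) (k+1) = bal i k + 2 * bal i (k+1) + bal i (k+2))
    (hv : ∀ i k, i < k → bal i k = 0)
    (T i j : ℕ) (hi : i + 1 ≤ T) (hj : j + 1 ≤ T) :
    (∑ k ∈ Finset.range (T+1), bal (i+1) k * bal j k)
    = ∑ k ∈ Finset.range (T+1), bal i k * bal (j+1) k := by
  have hcomm : (∑ k ∈ Finset.range (T+1), bal i k * bal (j+1) k)
      = ∑ k ∈ Finset.range (T+1), bal (j+1) k * bal i k :=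
    Finset.sum_congr rfl (fun k _ => mul_comm _ _)
  rw [hcomm, hankel_key bal c h0 hS hv T i j hi, hankel_key bal c h0 hS hv T j i hj]
  have hmid : (∑ k ∈ Finset.range T, bal i (k+1) * bal j (k+1))
      = ∑ k ∈ Finset.range T, bal j (k+1) * bal i (k+1) :=
    Finset.sum_congr rfl (fun k _ => mul_comm _ _)
  rw [hmid]
  ring

private lemma hankel_diag (bal : ℕ → ℕ → ℤ) (c : ℤ)
    (h0 : ∀ i, bal (i+1) 0 = c * bal i 0 + bal i 1)
    (hS : ∀ i k, bal (i+1) (k+1) = bal i k + 2 * bal i (k+1) + bal i (k+2))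
    (hv : ∀ i k, i < k → bal i k = 0)
    (h00 : bal 0 0 = 1) :
    ∀ (i j T : ℕ), i + j + 1 ≤ T →
    (∑ k ∈ Finset.range (T+1), bal i k * bal j k) = bal (i+j) 0 := by
  intro i
  induction i with
  | zero =>
    intro j T hT
    rw [Finset.sum_eq_single 0]
    · rw [h00, one_mul]
      norm_num
    · intro k _ hk
      rw [hv 0 k (Nat.pos_of_ne_zero hk), zero_mul]
    · intro h
      exact absurd (Finset.mem_range.mpr (by omega)) h
  | succ i ih =>
    intro j T hT
    rw [hankel_swap bal c h0 hS hv T i j (by omega) (by omega), ih (j+1) T (by omega)]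
    rw [show i + (j+1) = i + 1 + j by omega]

private lemma hankel_sum (bal : ℕ → ℕ → ℤ) (c : ℤ)
    (h0 : ∀ i, bal (i+1) 0 = c * bal i 0 + bal i 1)
    (hS : ∀ i k, bal (i+1) (k+1) = bal i k + 2 * bal i (k+1) + bal i (k+2))
    (hv : ∀ i k, i < k → bal i k = 0)
    (h00 : bal 0 0 = 1)
    (N i j : ℕ) (hi : i < N) (hj : j < N) :
    (∑ k ∈ Finset.range N, bal i k * bal j k) = bal (i+j) 0 := by
  have hM : ∀ (M : ℕ), N ≤ M → (∑ k ∈ Finset.range M, bal i k * bal j k)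
      = ∑ k ∈ Finset.range N, bal i k * bal j k := by
    intro M hNM
    symm
    apply Finset.sum_subset (Finset.range_subset_range.mpr hNM)
    intro k _ hk
    have hkN : ¬ k < N := by simpa using hk
    rw [hv i k (by omega), zero_mul]
  have key := hankel_diag bal c h0 hS hv h00 i j (max N (i+j+2) - 1) (by omega)
  rw [show (max N (i+j+2) - 1) + 1 = max N (i+j+2) by omega] at key
  rw [← hM (max N (i+j+2)) (by omega), key]

end HankelSum

section Bridges

private def catZ (t : ℕ) : ℤ := ((2*t).choose t : ℤ) - ((2*t).choose (t+1) : ℤ)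

private lemma conv_neg (p : ℤ) (h : p < 0) : convCatalanTwo p = 0 := if_pos h

private lemma conv_eq_bal1 (p : ℕ) : convCatalanTwo (p : ℤ) = bal1 p 0 := by
  unfold convCatalanTwo bal1
  rw [if_neg (by exact_mod_cast not_lt.mpr (Int.natCast_nonneg p))]
  simp only [Int.toNat_natCast]
  by_cases hp : p = 0
  · subst hp
    norm_num
  · rw [if_neg (by exact_mod_cast hp)]
    have h1 : ((2*p+1).choose p : ℤ) = (2*p+1).choose (p+0+1) := by
      rw [show p+0+1 = p+1 by omega]
      exact csymm p
    have h2 : ((2*p+1).choose (p-1) : ℤ) = (2*p+1).choose (p+0+2) := by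
      rw [show p+0+2 = p+2 by omega]
      have h := Nat.choose_symm (show p+2 ≤ 2*p+1 by omega)
      rw [show 2*p+1-(p+2) = p-1 by omega] at h
      exact_mod_cast h
    rw [h1, h2]

private lemma conv_eq_catZ (p : ℕ) : convCatalanTwo (p : ℤ) = catZ (p+1) := by
  rw [conv_eq_bal1]
  unfold catZ bal1
  rw [show 2*(p+1) = (2*p+1)+1 by ring, Nat.choose_succ_succ' (2*p+1) p,
    Nat.choose_succ_succ' (2*p+1) (p+1)]
  rw [show p+0+1 = p+1 by omega, show p+0+2 = p+2 by omega, show p+1+1 = p+2 by omega]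
  push_cast
  linear_combination (-1 : ℤ) * csymm p

private lemma bal1_diag (i : ℕ) : bal1 i i = 1 := by
  unfold bal1
  rw [show i+i+1 = 2*i+1 by ring, show i+i+2 = 2*i+2 by ring, Nat.choose_self,
    Nat.choose_eq_zero_of_lt (by omega)]
  simp

private lemma bal0_diag (i : ℕ) : bal0 i i = 1 := by
  unfold bal0
  rw [show i+i = 2*i by ring, Nat.choose_self, Nat.choose_eq_zero_of_lt (by omega)]
  simp

private lemma bal1_00 : bal1 0 0 = 1 := bal1_diag 0
private lemma bal0_00 : bal0 0 0 = 1 := bal0_diag 0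

end Bridges

section Dets

private def fmat (s : ℤ) (N : ℕ) : Matrix (Fin N) (Fin N) ℤ :=
  Matrix.of fun i j => convCatalanTwo ((i:ℕ) + (j:ℕ) + s)

private def Fdet (s : ℤ) (N : ℕ) : ℤ := (fmat s N).det

private def gmat (N : ℕ) : Matrix (Fin N) (Fin N) ℤ :=
  Matrix.of fun i j => catZ ((i:ℕ) + (j:ℕ))

private def Gdet (N : ℕ) : ℤ := (gmat N).det

private lemma det_of_bal (bal : ℕ → ℕ → ℤ)
    (hv : ∀ i k, i < k → bal i k = 0) (hd : ∀ i, bal i i = 1) (N : ℕ) :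
    (Matrix.of fun i k : Fin N => bal i k).det = 1 := by
  have htri : (Matrix.of fun i k : Fin N => bal i k).BlockTriangular OrderDual.toDual := by
    intro i j hij
    exact hv i j (by simpa using hij)
  rw [Matrix.det_of_lowerTriangular _ htri]
  simp [hd]

private lemma fact_det (bal : ℕ → ℕ → ℤ) (c : ℤ)
    (h0 : ∀ i, bal (i+1) 0 = c * bal i 0 + bal i 1)
    (hS : ∀ i k, bal (i+1) (k+1) = bal i k + 2 * bal i (k+1) + bal i (k+2))
    (hv : ∀ i k, i < k → bal i k = 0)
    (h00 : bal 0 0 = 1) (hd : ∀ i, bal i i = 1) (N : ℕ) :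
    (Matrix.of fun i j : Fin N => bal ((i:ℕ)+(j:ℕ)) 0).det = 1 := by
  have hfact : (Matrix.of fun i j : Fin N => bal ((i:ℕ)+(j:ℕ)) 0)
      = (Matrix.of fun i k : Fin N => bal i k)
        * (Matrix.of fun i k : Fin N => bal i k)ᵀ := by
    ext i j
    rw [Matrix.mul_apply]
    simp only [Matrix.transpose_apply, Matrix.of_apply]
    rw [Fin.sum_univ_eq_sum_range (fun k => bal i k * bal j k) N]
    exact (hankel_sum bal c h0 hS hv h00 N i j i.isLt j.isLt).symm
  rw [hfact, Matrix.det_mul, Matrix.det_transpose, det_of_bal bal hv hd N]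
  ring

private lemma Gdet_eq_one (N : ℕ) : Gdet N = 1 := by
  have h := fact_det bal0 1 bal0_rec0 bal0_recS bal0_vanish bal0_00 bal0_diag N
  have hmat : gmat N = Matrix.of fun i j : Fin N => bal0 ((i:ℕ)+(j:ℕ)) 0 := by
    ext i j
    simp only [gmat, Matrix.of_apply]
    unfold catZ bal0
    rw [show (i:ℕ)+(j:ℕ)+0 = (i:ℕ)+(j:ℕ) by omega,
      show (i:ℕ)+(j:ℕ)+0+1 = (i:ℕ)+(j:ℕ)+1 by omega]
  rw [Gdet, hmat, h]

private lemma Fdet_zero (N : ℕ) : Fdet 0 N = 1 := by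
  have h := fact_det bal1 2 bal1_rec0 bal1_recS bal1_vanish bal1_00 bal1_diag N
  have hmat : fmat 0 N = Matrix.of fun i j : Fin N => bal1 ((i:ℕ)+(j:ℕ)) 0 := by
    ext i j
    simp only [fmat, Matrix.of_apply]
    rw [show ((i:ℕ) : ℤ) + ((j:ℕ) : ℤ) + 0 = (((i:ℕ)+(j:ℕ) : ℕ) : ℤ) by push_cast; ring]
    exact conv_eq_bal1 _
  rw [Fdet, hmat, h]

end Dets

section DJInst

private lemma fmat_sub_cc (s : ℤ) (K : ℕ) :
    (fmat s (K+2)).submatrix Fin.castSucc Fin.castSucc = fmat s (K+1) := by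
  ext i j
  simp [fmat, Matrix.submatrix_apply]

private lemma fmat_sub_ss (s : ℤ) (K : ℕ) :
    (fmat s (K+2)).submatrix Fin.succ Fin.succ = fmat (s+2) (K+1) := by
  ext i j
  simp only [fmat, Matrix.submatrix_apply, Matrix.of_apply, Fin.val_succ]
  congr 1
  push_cast
  ring

private lemma fmat_sub_cs (s : ℤ) (K : ℕ) :
    (fmat s (K+2)).submatrix Fin.castSucc Fin.succ = fmat (s+1) (K+1) := by
  ext i j
  simp only [fmat, Matrix.submatrix_apply, Matrix.of_apply, Fin.val_succ, Fin.coe_castSucc]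
  congr 1
  push_cast
  ring

private lemma fmat_sub_sc (s : ℤ) (K : ℕ) :
    (fmat s (K+2)).submatrix Fin.succ Fin.castSucc = fmat (s+1) (K+1) := by
  ext i j
  simp only [fmat, Matrix.submatrix_apply, Matrix.of_apply, Fin.val_succ, Fin.coe_castSucc]
  congr 1
  push_cast
  ring

private lemma fmat_sub_inner (s : ℤ) (K : ℕ) :
    (fmat s (K+2)).submatrix (fun i : Fin K => i.castSucc.succ)
      (fun i : Fin K => i.castSucc.succ) = fmat (s+2) K := by
  ext i j
  simp only [fmat, Matrix.submatrix_apply, Matrix.of_apply, Fin.val_succ, Fin.coe_castSucc]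
  congr 1
  push_cast
  ring

private lemma fdet_dj (s : ℤ) (K : ℕ) :
    Fdet s (K+2) * Fdet (s+2) K
    = Fdet s (K+1) * Fdet (s+2) (K+1) - Fdet (s+1) (K+1) * Fdet (s+1) (K+1) := by
  have h := desnanot_jacobi (fmat s (K+2))
  rw [fmat_sub_cc, fmat_sub_ss, fmat_sub_cs, fmat_sub_sc, fmat_sub_inner] at h
  exact h

private lemma gmat_sub_cc (K : ℕ) :
    (gmat (K+2)).submatrix Fin.castSucc Fin.castSucc = gmat (K+1) := by
  ext i j
  simp [gmat, Matrix.submatrix_apply]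

private lemma gmat_sub_ss (K : ℕ) :
    (gmat (K+2)).submatrix Fin.succ Fin.succ = fmat 1 (K+1) := by
  ext i j
  simp only [gmat, fmat, Matrix.submatrix_apply, Matrix.of_apply, Fin.val_succ]
  rw [show (i:ℕ)+1+((j:ℕ)+1) = ((i:ℕ)+(j:ℕ)+1)+1 by omega, ← conv_eq_catZ]
  push_cast
  ring_nf

private lemma gmat_sub_cs (K : ℕ) :
    (gmat (K+2)).submatrix Fin.castSucc Fin.succ = fmat 0 (K+1) := by
  ext i j
  simp only [gmat, fmat, Matrix.submatrix_apply, Matrix.of_apply, Fin.val_succ, Fin.coe_castSucc]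
  rw [show (i:ℕ)+((j:ℕ)+1) = ((i:ℕ)+(j:ℕ))+1 by omega, ← conv_eq_catZ]
  push_cast
  ring_nf

private lemma gmat_sub_sc (K : ℕ) :
    (gmat (K+2)).submatrix Fin.succ Fin.castSucc = fmat 0 (K+1) := by
  ext i j
  simp only [gmat, fmat, Matrix.submatrix_apply, Matrix.of_apply, Fin.val_succ, Fin.coe_castSucc]
  rw [show (i:ℕ)+1+(j:ℕ) = ((i:ℕ)+(j:ℕ))+1 by omega, ← conv_eq_catZ]
  push_cast
  ring_nf

private lemma gmat_sub_inner (K : ℕ) :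
    (gmat (K+2)).submatrix (fun i : Fin K => i.castSucc.succ)
      (fun i : Fin K => i.castSucc.succ) = fmat 1 K := by
  ext i j
  simp only [gmat, fmat, Matrix.submatrix_apply, Matrix.of_apply, Fin.val_succ, Fin.coe_castSucc]
  rw [show (i:ℕ)+1+((j:ℕ)+1) = ((i:ℕ)+(j:ℕ)+1)+1 by omega, ← conv_eq_catZ]
  push_cast
  ring_nf

private lemma gdet_dj (K : ℕ) :
    Gdet (K+2) * Fdet 1 K
    = Gdet (K+1) * Fdet 1 (K+1) - Fdet 0 (K+1) * Fdet 0 (K+1) := by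
  have h := desnanot_jacobi (gmat (K+2))
  rw [gmat_sub_cc, gmat_sub_ss, gmat_sub_cs, gmat_sub_sc, gmat_sub_inner] at h
  exact h

private lemma Fdet_of_zero_size (s : ℤ) : Fdet s 0 = 1 := by
  simp [Fdet, Matrix.det_fin_zero]

private lemma Fdet_one : ∀ N : ℕ, Fdet 1 N = N + 1 := by
  intro N
  induction N with
  | zero => simp [Fdet_of_zero_size]
  | succ K ih =>
    have h := gdet_dj K
    rw [Gdet_eq_one, Gdet_eq_one, Fdet_zero, ih] at h
    push_cast
    push_cast at h
    linarith

end DJInst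

section SignTri

private def sgnC (m : ℕ) : ℤ := (-1)^((m+1).choose 2)

private lemma choose2_step (m : ℕ) : (m+2).choose 2 = (m+1).choose 2 + (m+1) := by
  rw [show m+2 = (m+1)+1 from rfl, Nat.choose_succ_succ' (m+1) 1, Nat.choose_one_right,
    show (1:ℕ)+1 = 2 from rfl]
  omega

private lemma sgnC_succ (m : ℕ) : sgnC (m+1) = (-1)^(m+1) * sgnC m := by
  unfold sgnC
  rw [show m+1+1 = m+2 from rfl, choose2_step, pow_add]
  ring

private lemma sgnC_sq (m : ℕ) : sgnC m * sgnC m = 1 := by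
  unfold sgnC
  rw [← pow_add]
  exact Even.neg_one_pow ⟨(m+1).choose 2, rfl⟩

private lemma sgnC_step (m : ℕ) : sgnC (m+2) * sgnC m = -1 := by
  have h1 : ((-1:ℤ))^(m+2) * (-1)^(m+1) = -1 := by
    rw [← pow_add]
    exact Odd.neg_one_pow ⟨m+1, by ring⟩
  have h2 := sgnC_sq m
  rw [sgnC_succ (m+1), sgnC_succ m]
  calc ((-1:ℤ))^(m+2) * ((-1)^(m+1) * sgnC m) * sgnC m
      = ((-1:ℤ))^(m+2) * (-1)^(m+1) * (sgnC m * sgnC m) := by ring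
    _ = -1 := by rw [h1, h2]; ring

private lemma Fdet_tri : ∀ m : ℕ, Fdet (-(m:ℤ)) (m+1) = sgnC m := by
  intro m
  induction m with
  | zero =>
    show (fmat (-(0:ℕ):ℤ) 1).det = sgnC 0
    rw [Matrix.det_fin_one]
    norm_num [fmat, convCatalanTwo, sgnC]
  | succ m ih =>
    show (fmat (-((m+1:ℕ)):ℤ) (m+2)).det = sgnC (m+1)
    rw [Matrix.det_succ_column_zero, Finset.sum_eq_single (Fin.last (m+1))]
    · have hentry : (fmat (-((m+1:ℕ)):ℤ) (m+2)) (Fin.last (m+1)) 0 = 1 := by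
        simp only [fmat, Matrix.of_apply, Fin.val_last, Fin.val_zero]
        rw [show ((m+1 : ℕ) : ℤ) + (0:ℕ) + -((m+1:ℕ):ℤ) = ((0:ℕ):ℤ) by push_cast; ring]
        rw [conv_eq_bal1 0, bal1_00]
      rw [hentry, Fin.succAbove_last]
      have hsub : (fmat (-((m+1:ℕ)):ℤ) (m+2)).submatrix Fin.castSucc Fin.succ
          = fmat (-(m:ℕ)) (m+1) := by
        ext i j
        simp only [fmat, Matrix.submatrix_apply, Matrix.of_apply, Fin.val_succ,
          Fin.coe_castSucc]
        congr 1
        push_cast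
        ring
      rw [hsub]
      rw [show (fmat (-(m:ℕ):ℤ) (m+1)).det = Fdet (-(m:ℕ):ℤ) (m+1) from rfl, ih,
        Fin.val_last, sgnC_succ]
      ring
    · intro i _ hi
      have hiv : (i:ℕ) < m+1 := by
        have := i.isLt
        have : (i:ℕ) ≠ m+1 := by
          intro hc
          exact hi (by ext; simp [hc, Fin.val_last])
        omega
      have hentry : (fmat (-((m+1:ℕ)):ℤ) (m+2)) i 0 = 0 := by
        simp only [fmat, Matrix.of_apply, Fin.val_zero]
        apply conv_neg
        push_cast
        omega
      rw [hentry]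
      ring
    · intro h; exact absurd (Finset.mem_univ _) h

end SignTri

section Pos

private lemma Fdet_pos_pair : ∀ s : ℕ, (∀ N, 1 ≤ Fdet (s:ℤ) N) ∧ (∀ N, 1 ≤ Fdet ((s:ℤ)+1) N) := by
  intro s
  induction s with
  | zero =>
    constructor
    · intro N
      rw [show ((0:ℕ):ℤ) = 0 by norm_num, Fdet_zero]
    · intro N
      rw [show ((0:ℕ):ℤ)+1 = 1 by norm_num, Fdet_one]
      have := Int.natCast_nonneg N
      linarith
  | succ s ih =>
    obtain ⟨h1, h2⟩ := ih
    have hcast1 : ((s+1:ℕ):ℤ) = (s:ℤ)+1 := by push_cast; ring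
    constructor
    · intro N
      rw [hcast1]
      exact h2 N
    · intro N
      rw [hcast1, show (s:ℤ)+1+1 = (s:ℤ)+2 by ring]
      induction N with
      | zero => rw [Fdet_of_zero_size]
      | succ K ihK =>
        have h := fdet_dj (s:ℤ) K
        have ha := h1 (K+1)
        have hb := h1 (K+2)
        have hc := ihK
        have hd := mul_self_nonneg (Fdet ((s:ℤ)+1) (K+1))
        have hbc : (1:ℤ) ≤ Fdet (s:ℤ) (K+2) * Fdet ((s:ℤ)+2) K := by nlinarith
        have hax : (1:ℤ) ≤ Fdet (s:ℤ) (K+1) * Fdet ((s:ℤ)+2) (K+1) := by nlinarith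
        by_contra hx
        push_neg at hx
        have hx' : Fdet ((s:ℤ)+2) (K+1) ≤ 0 := by omega
        nlinarith

end Pos

section MainInd

private def Pm (m : ℕ) : Prop :=
  ∀ n : ℕ, Fdet (-(m:ℤ)) (n+m+1) = sgnC m * Fdet (m:ℤ) n

private lemma sgnC_one : sgnC 1 = -1 := by
  norm_num [sgnC]

private lemma Pm_zero : Pm 0 := by
  intro n
  rw [show (-((0:ℕ):ℤ)) = 0 by norm_num, show ((0:ℕ):ℤ) = 0 by norm_num,
    Fdet_zero, Fdet_zero]
  norm_num [sgnC]

private lemma conv_zero : convCatalanTwo 0 = 1 := by decide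
private lemma conv_one : convCatalanTwo 1 = 2 := by decide

private lemma Pm_one : Pm 1 := by
  intro n
  induction n with
  | zero =>
    show Fdet (-(1:ℕ):ℤ) 2 = sgnC 1 * Fdet ((1:ℕ):ℤ) 0
    rw [Fdet_of_zero_size, sgnC_one]
    show (fmat (-(1:ℕ):ℤ) 2).det = -1 * 1
    rw [Matrix.det_fin_two]
    simp only [fmat, Matrix.of_apply, Fin.val_zero, Fin.val_one]
    norm_num [conv_zero, conv_one]
    exact conv_neg (-1) (by norm_num)
  | succ k ih =>
    have h := fdet_dj (-(1:ℕ):ℤ) (k+1)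
    rw [show (-((1:ℕ):ℤ))+2 = (1:ℤ) by norm_num,
        show (-((1:ℕ):ℤ))+1 = (0:ℤ) by norm_num,
        Fdet_one, Fdet_one, Fdet_zero] at h
    push_cast at h ih ⊢
    rw [Fdet_one, sgnC_one] at ih
    rw [Fdet_one, sgnC_one]
    push_cast at h ih ⊢
    rw [show k+1+2 = k+1+1+1 from rfl, ih] at h
    have hnz : ((k:ℤ)+1+1) ≠ 0 := by positivity
    apply mul_right_cancel₀ hnz
    linear_combination h

end MainInd

section MainStep

private lemma Pm_step (m : ℕ) (h1 : Pm m) (h2 : Pm (m+1)) : Pm (m+2) := by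
  intro n
  induction n with
  | zero =>
    show Fdet (-((m+2:ℕ)):ℤ) (0+(m+2)+1) = sgnC (m+2) * Fdet ((m+2:ℕ):ℤ) 0
    rw [Fdet_of_zero_size, show 0+(m+2)+1 = (m+2)+1 by omega, Fdet_tri (m+2)]
    ring
  | succ k ihk =>
    have hdj := fdet_dj (-((m+2:ℕ)):ℤ) (k+m+2)
    rw [show (-((m+2:ℕ):ℤ))+2 = -((m:ℕ):ℤ) by push_cast; ring,
        show (-((m+2:ℕ):ℤ))+1 = -((m+1:ℕ):ℤ) by push_cast; ring] at hdj
    have hm1 := h1 (k+1)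
    have hm2 := h1 (k+2)
    have hm1' := h2 (k+1)
    rw [show k+1+m+1 = k+m+2 by omega] at hm1
    rw [show k+2+m+1 = k+m+2+1 by omega] at hm2
    rw [show k+1+(m+1)+1 = k+m+2+1 by omega] at hm1'
    rw [show k+(m+2)+1 = k+m+2+1 by omega] at ihk
    rw [hm1, hm2, hm1', ihk] at hdj
    have djpos := fdet_dj ((m:ℕ):ℤ) k
    rw [show ((m:ℕ):ℤ)+2 = ((m+2:ℕ):ℤ) by push_cast; ring,
        show ((m:ℕ):ℤ)+1 = ((m+1:ℕ):ℤ) by push_cast; ring] at djpos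
    have hpos := (Fdet_pos_pair m).1 (k+1)
    have hnz : sgnC m * Fdet ((m:ℕ):ℤ) (k+1) ≠ 0 := by
      apply mul_ne_zero
      · exact pow_ne_zero _ (by norm_num)
      · omega
    rw [show k+1+(m+2)+1 = k+m+2+2 by omega]
    apply mul_right_cancel₀ hnz
    rw [hdj]
    have hstep := sgnC_step m
    have hsq := sgnC_sq (m+1)
    linear_combination (Fdet ((m+2:ℕ):ℤ) k * Fdet ((m:ℕ):ℤ) (k+2)
      - Fdet ((m+2:ℕ):ℤ) (k+1) * Fdet ((m:ℕ):ℤ) (k+1)) * hstep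
      + (-(Fdet ((m+1:ℕ):ℤ) (k+1) * Fdet ((m+1:ℕ):ℤ) (k+1))) * hsq
      + (-1 : ℤ) * djpos

private lemma Pm_all : ∀ m : ℕ, Pm m ∧ Pm (m+1) := by
  intro m
  induction m with
  | zero => exact ⟨Pm_zero, Pm_one⟩
  | succ m ih => exact ⟨ih.2, Pm_step m ih.1 ih.2⟩

end MainStep

/-- Cigler's conjecture for `k = 1`, even case. -/
theorem cigler_k_one_even (m n : ℕ) (hm : 1 ≤ m) :
    Matrix.det (Matrix.of fun i j : Fin (n + m + 1) =>
        convCatalanTwo ((i : ℕ) + (j : ℕ) - m)) =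
      (-1) ^ ((m + 1).choose 2) *
        Matrix.det (Matrix.of fun i j : Fin n =>
          convCatalanTwo ((i : ℕ) + (j : ℕ) + m)) := by
  have h := (Pm_all m).1 n
  have hL : (Matrix.of fun i j : Fin (n + m + 1) =>
      convCatalanTwo ((i : ℕ) + (j : ℕ) - m)) = fmat (-(m:ℤ)) (n+m+1) := by
    ext i j
    simp only [fmat, Matrix.of_apply]
    rw [sub_eq_add_neg]
  have hR : (Matrix.of fun i j : Fin n =>
      convCatalanTwo ((i : ℕ) + (j : ℕ) + m)) = fmat ((m:ℕ):ℤ) n := rfl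
  rw [hL, hR]
  exact h
end
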